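/- For p ∈ [0,1], let ρ = ((1+p)/2)|ψ⁻⟩⟨ψ⁻| + ((1−p)/2)|00⟩⟨00| be the rank-2 maximally entangled mixed state, where |ψ⁻⟩ = (|01⟩ − |10⟩)/√2. Then Σ_{i,j=1}^{3} (Re Tr(ρ (σ_i ⊗ σ_j)))² = (1 + 2p + 3p²)/2, i.e., the steering observable of ρ equals √((1+2p+3p²)/2). -/

import Mathlib

open Matrix ComplexOrder

/-! The correlation matrix `r_ij = Re Tr(ρ (σᵢ ⊗ σⱼ))` is real-linear in `ρ`. The singlet `|ψ⁻⟩`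
has `r = -I`, and `|00⟩` has `r = E₃₃`, so for the mixture `r = diag(-a, -a, b - a)` with
`a = (1 + p)/2`, `b = (1 - p)/2`, whose squared entries sum to `2a² + p² = (1 + 2p + 3p²)/2`. -/

/-- The three Pauli matrices σ₁, σ₂, σ₃. -/
noncomputable def pauli : Fin 3 → Matrix (Fin 2) (Fin 2) ℂ
  | 0 => !![0, 1; 1, 0]
  | 1 => !![0, -Complex.I; Complex.I, 0]
  | 2 => !![1, 0; 0, -1]

/-- Kronecker product of two 2×2 matrices, as a 4×4 matrix
(two-qubit basis ordering |00⟩, |01⟩, |10⟩, |11⟩). -/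
noncomputable def kron (A B : Matrix (Fin 2) (Fin 2) ℂ) : Matrix (Fin 4) (Fin 4) ℂ :=
  Matrix.of fun i j =>
    A ⟨i.val / 2, by have := i.isLt; omega⟩ ⟨j.val / 2, by have := j.isLt; omega⟩ *
    B ⟨i.val % 2, by have := i.isLt; omega⟩ ⟨j.val % 2, by have := j.isLt; omega⟩

/-- The rank-one projector |v⟩⟨v| onto a two-qubit vector v. -/
noncomputable def outer (v : Fin 4 → ℂ) : Matrix (Fin 4) (Fin 4) ℂ :=
  Matrix.of fun i j => v i * star (v j)

/-- The Bell state |ψ⁻⟩ = (|01⟩ - |10⟩)/√2. -/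
noncomputable def psiMinus : Fin 4 → ℂ := fun i => ![0, 1, -1, 0] i / (Real.sqrt 2 : ℂ)

/-- The computational basis state |00⟩. -/
noncomputable def ket00 : Fin 4 → ℂ := ![1, 0, 0, 0]

noncomputable def correlation (ρ : Matrix (Fin 4) (Fin 4) ℂ) (i j : Fin 3) : ℝ :=
  ((ρ * kron (pauli i) (pauli j)).trace).re

lemma correlation_add (ρ σ : Matrix (Fin 4) (Fin 4) ℂ) (i j : Fin 3) :
    correlation (ρ + σ) i j = correlation ρ i j + correlation σ i j := by
  simp [correlation, add_mul, trace_add]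

lemma correlation_ofReal_smul (a : ℝ) (ρ : Matrix (Fin 4) (Fin 4) ℂ) (i j : Fin 3) :
    correlation ((a : ℂ) • ρ) i j = a * correlation ρ i j := by
  simp [correlation, trace_smul]

lemma trace_outer_mul (v : Fin 4 → ℂ) (M : Matrix (Fin 4) (Fin 4) ℂ) :
    (outer v * M).trace = star v ⬝ᵥ (M *ᵥ v) := by
  simp only [trace, diag, mul_apply, outer, of_apply, dotProduct, mulVec, Finset.mul_sum]
  rw [Finset.sum_comm]
  exact Finset.sum_congr rfl fun _ _ => Finset.sum_congr rfl fun _ _ => by simp only [Pi.star_apply]; ring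

lemma trace_outer_psiMinus_mul_kron (A B : Matrix (Fin 2) (Fin 2) ℂ) :
    (outer psiMinus * kron A B).trace =
      (A 0 0 * B 1 1 - A 0 1 * B 1 0 - A 1 0 * B 0 1 + A 1 1 * B 0 0) / 2 := by
  have h2 : (Real.sqrt 2 : ℂ) ^ 2 = 2 := by
    rw [← Complex.ofReal_pow, Real.sq_sqrt zero_le_two]; norm_num
  simp only [trace_outer_mul, dotProduct, mulVec, Fin.sum_univ_four, kron, psiMinus, of_apply,
    Pi.star_apply, star_div₀, RCLike.star_def, Complex.conj_ofReal, map_zero, map_one, map_neg,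
    Fin.isValue, Fin.coe_ofNat_eq_mod, Nat.reduceMod, Nat.reduceDiv, Fin.zero_eta, Fin.mk_one,
    cons_val_zero, cons_val_one, cons_val, zero_div, zero_mul, mul_zero, add_zero, zero_add]
  field_simp
  rw [h2]; ring

lemma trace_outer_ket00_mul_kron (A B : Matrix (Fin 2) (Fin 2) ℂ) :
    (outer ket00 * kron A B).trace = A 0 0 * B 0 0 := by
  simp [trace_outer_mul, dotProduct, mulVec, Fin.sum_univ_four, ket00, kron]

lemma correlation_outer_psiMinus (i j : Fin 3) :
    correlation (outer psiMinus) i j = if i = j then -1 else 0 := by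
  fin_cases i <;> fin_cases j <;>
    norm_num [correlation, trace_outer_psiMinus_mul_kron, pauli]

lemma correlation_outer_ket00 (i j : Fin 3) :
    correlation (outer ket00) i j = if i = 2 ∧ j = 2 then 1 else 0 := by
  fin_cases i <;> fin_cases j <;>
    simp [correlation, trace_outer_ket00_mul_kron, pauli]

theorem stmt5_general (p : ℝ)
    (ρ : Matrix (Fin 4) (Fin 4) ℂ)
    (hρ : ρ = (((1 + p) / 2 : ℝ) : ℂ) • outer psiMinus +
        (((1 - p) / 2 : ℝ) : ℂ) • outer ket00) :
    ∑ i, ∑ j, ((ρ * kron (pauli i) (pauli j)).trace).re ^ 2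
      = (1 + 2 * p + 3 * p ^ 2) / 2 := by
  change ∑ i, ∑ j, correlation ρ i j ^ 2 = _
  simp only [hρ, correlation_add, correlation_ofReal_smul, correlation_outer_psiMinus,
    correlation_outer_ket00, Fin.sum_univ_three, Fin.isValue, Fin.reduceEq, and_true, and_false,
    ↓reduceIte]
  ring

/-- For the rank-2 MEMS state `ρ = ((1+p)/2)|ψ⁻⟩⟨ψ⁻| + ((1−p)/2)|00⟩⟨00|` with
p ∈ [0,1], the squared steering observable `Σ_{i,j} (Re Tr(ρ (σᵢ ⊗ σⱼ)))²` equals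
`(1 + 2p + 3p²)/2`. -/
theorem stmt5 (p : ℝ) (hp : p ∈ Set.Icc (0 : ℝ) 1)
    (ρ : Matrix (Fin 4) (Fin 4) ℂ)
    (hρ : ρ = (((1 + p) / 2 : ℝ) : ℂ) • outer psiMinus +
        (((1 - p) / 2 : ℝ) : ℂ) • outer ket00) :
    ∑ i, ∑ j, ((ρ * kron (pauli i) (pauli j)).trace).re ^ 2
      = (1 + 2 * p + 3 * p ^ 2) / 2 :=
  stmt5_general p ρ hρ
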